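/- arXiv:2306.09000 — 4 statements merged into one kernel-verified Lean document; each statement's English description precedes it below -/
import Mathlib

section
/- Consider gradient descent on the diagonal quadratic f(w) = (1/2) Σ_{i=1}^d λ_i w_i^2 with λ1 ≥ ... ≥ λd > 0 and learning rate η with 0 < η < 2/(λ1 + λd) and λ1 > λd. Then for any initial point w_0 with (w_0)_d ≠ 0, we have |(w_t)_d| / |(w_t)_1| → ∞ (interpreting the ratio as ∞ when (w_t)_1 = 0); in particular the normalized iterate does not converge to the top eigenspace. -/
/-!
Coordinatewise, gradient descent is geometric: `(w_t)_i = (1 - η λ_i)^t (w_0)_i`. The step-size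
condition `η < 2 / (λ₁ + λ_d)` is exactly what makes `|1 - η λ₁| < 1 - η λ_d`, so
`|(w_t)_1| / |(w_t)_d|` decays like `(|1 - η λ₁| / (1 - η λ_d))^t`. Since `|(w_t)_d| ≤ ‖w_t‖`, the
first coordinate of the normalized iterate tends to `0`, which no unit vector of the top
eigenspace allows.
-/

open Filter Topology

theorem pow_mul_of_forall_succ_eq_mul {M : Type*} [Monoid M] {u : ℕ → M} {c : M}
    (h : ∀ t, u (t + 1) = c * u t) (t : ℕ) : u t = c ^ t * u 0 := by
  induction t with
  | zero => simp
  | succ t ih => rw [h, ih, pow_succ', mul_assoc]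

theorem abs_one_sub_mul_lt_abs_one_sub_mul {η μ ν : ℝ} (hη : 0 < η) (hη2 : η < 2 / (μ + ν))
    (hgap : ν < μ) : |1 - η * μ| < |1 - η * ν| := by
  have hsum : 0 < μ + ν := (div_pos_iff_of_pos_left two_pos).mp (hη.trans hη2)
  have hstep : η * (μ + ν) < 2 := (lt_div_iff₀ hsum).mp hη2
  have hmono : η * ν < η * μ := mul_lt_mul_of_pos_left hgap hη
  rw [abs_of_pos (by linarith : 0 < 1 - η * ν), abs_lt]
  constructor <;> linarith

theorem tendsto_abs_div_abs_pow_mul {a b : ℝ} (hab : |b| < |a|) (x₀ y₀ : ℝ) :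
    Tendsto (fun t : ℕ => |b ^ t * y₀| / |a ^ t * x₀|) atTop (𝓝 0) := by
  have ha : 0 < |a| := (abs_nonneg b).trans_lt hab
  have hgeom : Tendsto (fun t : ℕ => (|b| / |a|) ^ t) atTop (𝓝 0) :=
    tendsto_pow_atTop_nhds_zero_of_lt_one (by positivity) ((div_lt_one ha).mpr hab)
  convert hgeom.mul_const (|y₀| / |x₀|) using 1
  · ext t
    rw [abs_mul, abs_mul, abs_pow, abs_pow, div_pow, mul_div_mul_comm]
  · rw [zero_mul]

theorem ENNReal.tendsto_ofReal_abs_div_ofReal_abs_top {α : Type*} {l : Filter α} {f g : α → ℝ}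
    (hf : ∀ x, f x ≠ 0) (h : Tendsto (fun x => |g x| / |f x|) l (𝓝 0)) :
    Tendsto (fun x => ENNReal.ofReal |f x| / ENNReal.ofReal |g x|) l (𝓝 ⊤) := by
  have hinv : Tendsto (fun x => (ENNReal.ofReal (|g x| / |f x|))⁻¹) l (𝓝 ⊤) := by
    rw [← ENNReal.inv_zero]
    exact tendsto_inv_iff.mpr (by simpa using ENNReal.tendsto_ofReal h)
  refine hinv.congr fun x => ?_
  rw [ENNReal.ofReal_div_of_pos (abs_pos.mpr (hf x)), ENNReal.inv_div (by simp) (by simp [hf x])]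

theorem tendsto_inv_norm_smul_apply_zero {ι : Type*} [Fintype ι] {w : ℕ → EuclideanSpace ℝ ι}
    {i j : ι} (hj : ∀ t, w t j ≠ 0) (h : Tendsto (fun t => |w t i| / |w t j|) atTop (𝓝 0)) :
    Tendsto (fun t => (‖w t‖⁻¹ • w t) i) atTop (𝓝 0) := by
  rw [tendsto_zero_iff_abs_tendsto_zero]
  refine squeeze_zero (fun t => abs_nonneg _) (fun t => ?_) h
  rw [Function.comp_apply, PiLp.smul_apply, smul_eq_mul, abs_mul, abs_inv, abs_norm, inv_mul_eq_div]
  exact div_le_div_of_nonneg_left (abs_nonneg _) (abs_pos.mpr (hj t))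
    (Real.norm_eq_abs _ ▸ PiLp.norm_apply_le _ j)

theorem stmt_4_general (d : ℕ) (lam : Fin d → ℝ) (η : ℝ)
    (i0 : Fin d) (ilast : Fin d)
    (hη : 0 < η) (hη2 : η < 2 / (lam i0 + lam ilast))
    (hgap : lam ilast < lam i0)
    (w : ℕ → EuclideanSpace ℝ (Fin d))
    (hrec : ∀ t (i : Fin d), w (t + 1) i = (1 - η * lam i) * w t i)
    (hw0 : w 0 ilast ≠ 0) :
    Tendsto (fun t => ENNReal.ofReal |w t ilast| / ENNReal.ofReal |w t i0|)
        atTop (nhds ⊤) ∧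
      ¬ ∃ v : EuclideanSpace ℝ (Fin d), ‖v‖ = 1 ∧
          (∃ c : ℝ, v = c • EuclideanSpace.single i0 (1 : ℝ)) ∧
          Tendsto (fun t => ‖w t‖⁻¹ • w t) atTop (nhds v) := by
  have hclosed (i : Fin d) (t : ℕ) : w t i = (1 - η * lam i) ^ t * w 0 i :=
    pow_mul_of_forall_succ_eq_mul (u := fun t => w t i) (fun t => hrec t i) t
  have hfactor := abs_one_sub_mul_lt_abs_one_sub_mul hη hη2 hgap
  have hratio : Tendsto (fun t => |w t i0| / |w t ilast|) atTop (𝓝 0) := by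
    refine (tendsto_abs_div_abs_pow_mul hfactor (w 0 ilast) (w 0 i0)).congr fun t => ?_
    rw [hclosed i0 t, hclosed ilast t]
  have hlast (t : ℕ) : w t ilast ≠ 0 := by
    rw [hclosed]
    exact mul_ne_zero (pow_ne_zero _ (abs_pos.mp ((abs_nonneg _).trans_lt hfactor))) hw0
  refine ⟨ENNReal.tendsto_ofReal_abs_div_ofReal_abs_top hlast hratio, ?_⟩
  rintro ⟨v, hv, ⟨c, rfl⟩, hlim⟩
  have hcoord := ((PiLp.continuous_apply 2 _ i0).tendsto _).comp hlim
  have hc : c = 0 := by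
    simpa using tendsto_nhds_unique hcoord (tendsto_inv_norm_smul_apply_zero hlast hratio)
  simp [hc] at hv

/-- GD on a diagonal quadratic with `0 < η < 2/(λ1+λd)` and `λ1 > λd`:
the bottom-eigenvalue component dominates, `|(w_t)_d|/|(w_t)_1| → ∞`
(interpreted in `ℝ≥0∞`, so the ratio is `∞` when `(w_t)_1 = 0`), and the
normalized iterate does not converge to a unit vector in the top eigenspace. -/
theorem stmt_4 (d : ℕ) (hd : 0 < d) (lam : Fin d → ℝ) (η : ℝ)
    (i0 : Fin d) (ilast : Fin d)
    (hi0 : i0 = ⟨0, hd⟩) (hilast : ilast = ⟨d - 1, Nat.sub_lt hd one_pos⟩)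
    (hpos : ∀ i, 0 < lam i)
    (hsorted : ∀ i j : Fin d, i ≤ j → lam j ≤ lam i)
    (hη : 0 < η) (hη2 : η < 2 / (lam i0 + lam ilast))
    (hgap : lam ilast < lam i0)
    (w : ℕ → EuclideanSpace ℝ (Fin d))
    (hrec : ∀ t (i : Fin d), w (t + 1) i = (1 - η * lam i) * w t i)
    (hw0 : w 0 ilast ≠ 0) :
    Tendsto (fun t => ENNReal.ofReal |w t ilast| / ENNReal.ofReal |w t i0|)
        atTop (nhds ⊤) ∧
      ¬ ∃ v : EuclideanSpace ℝ (Fin d), ‖v‖ = 1 ∧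
          (∃ c : ℝ, v = c • EuclideanSpace.single i0 (1 : ℝ)) ∧
          Tendsto (fun t => ‖w t‖⁻¹ • w t) atTop (nhds v) :=
  stmt_4_general d lam η i0 ilast hη hη2 hgap w hrec hw0
end

section
/- Fix 0 ≤ μ < 1, and let g(x) denote the spectral radius of the polynomial z^2 - ((1+μ) - x) z + μ (the maximum modulus of its two complex roots). Then for any interval [a, b] ⊆ ℝ, the maximum of g over [a, b] is attained at an endpoint: max_{x ∈ [a,b]} g(x) = max(g(a), g(b)). -/
/-!
Writing `t = (1 + μ) - x`, the roots of `z² - t z + μ` are complex conjugates of modulus `√μ`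
when `t² < 4μ`, and otherwise real with larger modulus `|t|/2 + √(t²/4 - μ)`. Hence
`hbRad μ x = max √μ (|t|/2 + √(t²/4 - μ))` is a monotone function of the convex quantity `t²`,
so it is quasiconvex, and a quasiconvex function on a segment is bounded by its values at
the endpoints.
-/

/-- Spectral radius of the heavy-ball iteration: the maximum modulus of the two
roots `a/2 ± sqrt((a/2)^2 - μ)` of `z^2 - a z + μ`, `a = (1+μ) - x`. -/
noncomputable def hbRad (μ x : ℝ) : ℝ :=
  max (‖(((1 + μ) - x : ℝ) : ℂ) / 2 +
        (((((1 + μ) - x : ℝ) : ℂ) / 2) ^ 2 - (μ : ℂ)) ^ ((1 : ℂ) / 2)‖)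
      (‖(((1 + μ) - x : ℝ) : ℂ) / 2 -
        (((((1 + μ) - x : ℝ) : ℂ) / 2) ^ 2 - (μ : ℂ)) ^ ((1 : ℂ) / 2)‖)

open Set

theorem QuasiconvexOn.isGreatest_image_Icc {𝕜 β : Type*} [Field 𝕜] [LinearOrder 𝕜]
    [IsStrictOrderedRing 𝕜] [LinearOrder β] {s : Set 𝕜} {f : 𝕜 → β} (hf : QuasiconvexOn 𝕜 s f)
    {a b : 𝕜} (ha : a ∈ s) (hb : b ∈ s) (hab : a ≤ b) :
    IsGreatest (f '' Icc a b) (max (f a) (f b)) := by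
  refine ⟨?_, ?_⟩
  · rcases max_choice (f a) (f b) with h | h <;> rw [h]
    exacts [mem_image_of_mem f (left_mem_Icc.2 hab), mem_image_of_mem f (right_mem_Icc.2 hab)]
  · rintro _ ⟨x, hx, rfl⟩
    have hseg := (hf (max (f a) (f b))).segment_subset ⟨ha, le_max_left _ _⟩ ⟨hb, le_max_right _ _⟩
    exact (hseg (by rwa [segment_eq_Icc hab])).2

theorem max_abs_add_abs_sub (x y : ℝ) : max |x + y| |x - y| = |x| + |y| := by
  grind

open Complex in
theorem Complex.ofReal_cpow_one_div_two_of_nonneg {d : ℝ} (hd : 0 ≤ d) :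
    (d : ℂ) ^ ((1 : ℂ) / 2) = √d := by
  rw [Real.sqrt_eq_rpow, ofReal_cpow hd]
  norm_num

open Complex in
theorem Complex.ofReal_cpow_one_div_two_of_neg {d : ℝ} (hd : d < 0) :
    (d : ℂ) ^ ((1 : ℂ) / 2) = √(-d) * I := by
  rw [one_div]
  apply Complex.ext
  · simp [cpow_inv_two_re, abs_of_neg hd]
  · rw [cpow_inv_two_im_eq_sqrt (by simp), norm_real, Real.norm_eq_abs, abs_of_neg hd, ofReal_re,
      show (-d - d) / 2 = -d by ring]
    simp

-- `t/2 ± √(t²/4 - μ)` are the roots of `z² - t z + μ`.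
noncomputable def quadRootRadius (t μ : ℝ) : ℝ :=
  max ‖(t : ℂ) / 2 + (((t : ℂ) / 2) ^ 2 - μ) ^ ((1 : ℂ) / 2)‖
    ‖(t : ℂ) / 2 - (((t : ℂ) / 2) ^ 2 - μ) ^ ((1 : ℂ) / 2)‖

theorem hbRad_eq_quadRootRadius (μ x : ℝ) : hbRad μ x = quadRootRadius ((1 + μ) - x) μ := rfl

-- When `t² < 4μ` the second term is `|t|/2`, since `√` of a negative real is `0`.
open Complex in
theorem quadRootRadius_eq (t μ : ℝ) :
    quadRootRadius t μ = max √μ (|t| / 2 + √(t ^ 2 / 4 - μ)) := by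
  have hdisc : ((t : ℂ) / 2) ^ 2 - μ = ((t ^ 2 / 4 - μ : ℝ) : ℂ) := by push_cast; ring
  have hhalf : |t| / 2 = √((t / 2) ^ 2) := by rw [Real.sqrt_sq_eq_abs, abs_div, abs_two]
  rw [quadRootRadius, hdisc]
  set d := t ^ 2 / 4 - μ with hd_def
  rcases lt_or_ge d 0 with hd | hd
  · have hroot (s : ℝ) (hs : s ^ 2 = -d) : ‖(t : ℂ) / 2 + s * I‖ = √μ := by
      rw [show (t : ℂ) / 2 = ((t / 2 : ℝ) : ℂ) by push_cast; ring, norm_add_mul_I, hs, hd_def]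
      ring_nf
    have hsq : √(-d) ^ 2 = -d := Real.sq_sqrt (by linarith)
    rw [ofReal_cpow_one_div_two_of_neg hd, hroot _ hsq,
      show (t : ℂ) / 2 - √(-d) * I = t / 2 + ((-√(-d) : ℝ) : ℂ) * I by push_cast; ring,
      hroot _ (by rw [neg_sq, hsq]), max_self, Real.sqrt_eq_zero'.2 hd.le, add_zero, hhalf,
      max_eq_left]
    exact Real.sqrt_le_sqrt (by linarith)
  · rw [ofReal_cpow_one_div_two_of_nonneg hd, ← ofReal_ofNat, ← ofReal_div, ← ofReal_add,
      ← ofReal_sub, norm_real, norm_real, Real.norm_eq_abs, Real.norm_eq_abs, max_abs_add_abs_sub,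
      abs_of_nonneg (Real.sqrt_nonneg _), abs_div, abs_two, max_eq_right]
    rw [hhalf]
    exact le_add_of_le_of_nonneg (Real.sqrt_le_sqrt (by linarith)) (Real.sqrt_nonneg _)

theorem quasiconvexOn_hbRad (μ : ℝ) : QuasiconvexOn ℝ univ (hbRad μ) := by
  have hmono : Monotone fun u : ℝ => max √μ (√u / 2 + √(u / 4 - μ)) := fun u v h => by
    dsimp only
    gcongr
  have hconv : ConvexOn ℝ univ fun x : ℝ => ((1 + μ) - x) ^ 2 := by
    simpa [Function.comp_def] using (even_two.convexOn_pow (𝕜 := ℝ)).comp_affineMap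
      (AffineMap.const ℝ ℝ (1 + μ) - AffineMap.id ℝ ℝ)
  have hcomp : hbRad μ = (fun u : ℝ => max √μ (√u / 2 + √(u / 4 - μ))) ∘
      fun x : ℝ => ((1 + μ) - x) ^ 2 := by
    funext x
    rw [Function.comp_apply, hbRad_eq_quadRootRadius, quadRootRadius_eq, Real.sqrt_sq_eq_abs]
  rw [hcomp]
  exact hconv.quasiconvexOn.monotone_comp hmono

theorem stmt_7_general (μ : ℝ) (a b : ℝ) (hab : a ≤ b) :
    IsGreatest (hbRad μ '' Set.Icc a b) (max (hbRad μ a) (hbRad μ b)) :=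
  (quasiconvexOn_hbRad μ).isGreatest_image_Icc (mem_univ a) (mem_univ b) hab

/-- The maximum of the heavy-ball spectral radius over an interval `[a,b]`
is attained at an endpoint. -/
theorem stmt_7 (μ : ℝ) (hμ0 : 0 ≤ μ) (hμ1 : μ < 1) (a b : ℝ) (hab : a ≤ b) :
    IsGreatest (hbRad μ '' Set.Icc a b) (max (hbRad μ a) (hbRad μ b)) :=
  stmt_7_general μ a b hab
end

section
/- Let 0 ≤ μ < 1, η > 0, λ > 0. Both roots of z^2 - ((1+μ) - (1-μ)ηλ) z + μ = 0 have modulus strictly less than 1 if and only if 0 < (1-μ)ηλ < 2(1+μ). -/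
/-!
A real monic quadratic `z² - b z + c` has both roots in the open unit disk iff `|c| < 1` and
`|b| < 1 + c` (the Schur–Cohn–Jury conditions). Non-real roots are conjugate, of squared
modulus `c`; real roots `t, u` have `tu = c` and `(1 ∓ t)(1 ∓ u) = 1 ∓ b + c`, so they lie in
`(-1, 1)` exactly when these three numbers are positive. For the heavy-ball polynomial,
`c = μ` and `b = (1 + μ) - s` with `s = (1 - μ)ηλ`, and the conditions read
`0 < s < 2(1 + μ)`.
-/

open Complex

theorem abs_lt_one_and_abs_lt_one_iff (t u : ℝ) :
    |t| < 1 ∧ |u| < 1 ↔ |t * u| < 1 ∧ |t + u| < 1 + t * u := by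
  simp only [abs_lt]
  constructor
  · rintro ⟨⟨ht₁, ht₂⟩, hu₁, hu₂⟩
    refine ⟨⟨?_, ?_⟩, ?_, ?_⟩ <;> nlinarith
  · rintro ⟨⟨hc₁, hc₂⟩, hb₁, hb₂⟩
    have hminus : 0 < (1 - t) * (1 - u) := by nlinarith
    have hplus : 0 < (1 + t) * (1 + u) := by nlinarith
    refine ⟨⟨?_, ?_⟩, ?_, ?_⟩ <;> nlinarith

theorem normSq_eq_of_sq_sub_mul_add_eq_zero {b c : ℝ} {z : ℂ}
    (hz : z ^ 2 - b * z + c = 0) (him : z.im ≠ 0) : normSq z = c := by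
  have hre := congrArg re hz
  have him' := congrArg im hz
  simp only [sq, sub_re, add_re, mul_re, sub_im, add_im, mul_im, ofReal_re, ofReal_im,
    zero_re, zero_im] at hre him'
  have hb : 2 * z.re = b := by
    have : z.im * (2 * z.re - b) = 0 := by linear_combination him'
    linarith [(mul_eq_zero.mp this).resolve_left him]
  rw [normSq_apply]
  linear_combination -hre + z.re * hb

theorem abs_lt_one_and_abs_lt_one_add_of_roots_norm_lt_one {b c : ℝ}
    (h : ∀ z : ℂ, z ^ 2 - (b : ℂ) * z + c = 0 → ‖z‖ < 1) : |c| < 1 ∧ |b| < 1 + c := by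
  rcases lt_or_ge (b ^ 2) (4 * c) with hd | hd
  · -- the roots are `b / 2 ± i √(c - b² / 4)`, of squared modulus `c`
    obtain ⟨y, hy⟩ : ∃ y : ℝ, y ^ 2 = c - b ^ 2 / 4 :=
      ⟨_, Real.sq_sqrt (by linarith)⟩
    set z : ℂ := ⟨b / 2, y⟩
    have hz : z ^ 2 - (b : ℂ) * z + c = 0 := by
      apply Complex.ext
      · simp only [z, sq, add_re, sub_re, mul_re, ofReal_re, ofReal_im, zero_mul, sub_zero,
          zero_re]
        linear_combination -hy
      · simp only [z, sq, add_im, sub_im, mul_im, ofReal_re, ofReal_im, zero_mul, add_zero,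
          zero_im]
        ring
    have hc : c < 1 := by
      have hnorm : ‖z‖ ^ 2 = c := by
        rw [Complex.sq_norm, normSq_mk]; linear_combination hy
      nlinarith [h z hz, norm_nonneg z]
    refine ⟨abs_lt.mpr ⟨by nlinarith, hc⟩, abs_lt_of_sq_lt_sq ?_ ?_⟩ <;> nlinarith
  · have hd2 := Real.sq_sqrt (show 0 ≤ b ^ 2 - 4 * c by linarith)
    set t := (b + √(b ^ 2 - 4 * c)) / 2
    set u := (b - √(b ^ 2 - 4 * c)) / 2
    have hb : t + u = b := by ring
    have hc : t * u = c := by linear_combination -hd2 / 4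
    have hroot (w : ℝ) (hw : w = t ∨ w = u) : ‖(w : ℂ)‖ < 1 := by
      refine h w ?_
      rw [← hb, ← hc]
      push_cast
      rcases hw with rfl | rfl <;> ring
    have := (abs_lt_one_and_abs_lt_one_iff t u).mp
      ⟨by simpa using hroot t (.inl rfl), by simpa using hroot u (.inr rfl)⟩
    rwa [hb, hc] at this

theorem norm_lt_one_of_sq_sub_mul_add_eq_zero {b c : ℝ} (hc : |c| < 1) (hb : |b| < 1 + c)
    {z : ℂ} (hz : z ^ 2 - (b : ℂ) * z + c = 0) : ‖z‖ < 1 := by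
  by_cases him : z.im = 0
  · -- a real root `t` comes with the real cofactor root `b - t`
    obtain ⟨t, rfl⟩ : ∃ t : ℝ, (t : ℂ) = z := ⟨z.re, Complex.ext rfl him.symm⟩
    have ht : t ^ 2 - b * t + c = 0 := by exact_mod_cast hz
    have hprod : t * (b - t) = c := by linear_combination -ht
    have := (abs_lt_one_and_abs_lt_one_iff t (b - t)).mpr
      (by rw [hprod, add_sub_cancel]; exact ⟨hc, hb⟩)
    simpa using this.1
  · have hnorm : ‖z‖ ^ 2 < 1 := by
      rw [Complex.sq_norm, normSq_eq_of_sq_sub_mul_add_eq_zero hz him]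
      exact (le_abs_self c).trans_lt hc
    nlinarith [norm_nonneg z]

theorem roots_norm_lt_one_iff (b c : ℝ) :
    (∀ z : ℂ, z ^ 2 - (b : ℂ) * z + c = 0 → ‖z‖ < 1) ↔ |c| < 1 ∧ |b| < 1 + c :=
  ⟨abs_lt_one_and_abs_lt_one_add_of_roots_norm_lt_one,
    fun ⟨hc, hb⟩ _ hz => norm_lt_one_of_sq_sub_mul_add_eq_zero hc hb hz⟩

theorem stmt_10_general (μ η lam : ℝ) (hμ1 : μ < 1) :
    (∀ z : ℂ, z ^ 2 - (((1 + μ) - (1 - μ) * η * lam : ℝ) : ℂ) * z + (μ : ℂ) = 0 →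
        ‖z‖ < 1) ↔
      (0 < (1 - μ) * η * lam ∧ (1 - μ) * η * lam < 2 * (1 + μ)) := by
  rw [roots_norm_lt_one_iff, abs_lt, abs_lt]
  constructor
  · rintro ⟨-, hb₁, hb₂⟩
    constructor <;> linarith
  · rintro ⟨hs₁, hs₂⟩
    refine ⟨⟨?_, hμ1⟩, ?_, ?_⟩ <;> linarith

/-- Stability of heavy-ball momentum on a quadratic: all complex roots of
`z^2 - ((1+μ) - (1-μ)ηλ) z + μ` lie strictly inside the unit disk iff
`0 < (1-μ)ηλ < 2(1+μ)`. -/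
theorem stmt_10 (μ η lam : ℝ) (hμ0 : 0 ≤ μ) (hμ1 : μ < 1) (hη : 0 < η) (hlam : 0 < lam) :
    (∀ z : ℂ, z ^ 2 - (((1 + μ) - (1 - μ) * η * lam : ℝ) : ℂ) * z + (μ : ℂ) = 0 →
        ‖z‖ < 1) ↔
      (0 < (1 - μ) * η * lam ∧ (1 - μ) * η * lam < 2 * (1 + μ)) :=
  stmt_10_general μ η lam hμ1
end

section
/- If 0 ≤ μ < 1 and x := (1-μ)ηλ satisfies x > (1+√μ)^2, then the heavy-ball characteristic equation z^2 - ((1+μ) - x) z + μ = 0 has two real roots and at least one root of modulus greater than √μ; moreover the larger-modulus root is negative. -/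
/-- If `x = (1-μ)ηλ > (1+√μ)^2`, the heavy-ball characteristic equation
`z^2 - ((1+μ) - x) z + μ = 0` has two distinct real roots, at least one root of
modulus greater than `√μ`, and the larger-modulus root is negative. -/
theorem stmt_12 (μ x : ℝ) (hμ0 : 0 ≤ μ) (hμ1 : μ < 1)
    (hx : x > (1 + Real.sqrt μ) ^ 2) :
    ∃ z1 z2 : ℝ, z1 ≠ z2 ∧
      (∀ z : ℂ, z ^ 2 - (((1 + μ) - x : ℝ) : ℂ) * z + (μ : ℂ) = 0 ↔
        z = (z1 : ℂ) ∨ z = (z2 : ℂ)) ∧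
      max |z1| |z2| > Real.sqrt μ ∧
      (|z2| ≤ |z1| → z1 < 0) ∧ (|z1| ≤ |z2| → z2 < 0) := by
  set s := Real.sqrt μ with hs
  have hs0 : 0 ≤ s := Real.sqrt_nonneg μ
  have hs2 : s ^ 2 = μ := Real.sq_sqrt hμ0
  set b := (1 + μ) - x with hbdef
  have hb : b < -2 * s := by
    have : x > 1 + 2 * s + μ := by nlinarith [hx]
    simp only [hbdef]; linarith
  have hbneg : b < 0 := by nlinarith
  set D := b ^ 2 - 4 * μ with hD
  have hDpos : 0 < D := by nlinarith
  set d := Real.sqrt D with hd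
  have hd0 : 0 < d := Real.sqrt_pos.mpr hDpos
  have hd2 : d ^ 2 = D := Real.sq_sqrt hDpos.le
  have hdb : d ≤ -b := by
    have : d ^ 2 ≤ (-b) ^ 2 := by nlinarith
    nlinarith
  refine ⟨(b - d) / 2, (b + d) / 2, by intro h; nlinarith, ?_, ?_, ?_, ?_⟩
  · intro z
    have hsum : ((b - d) / 2 : ℝ) + ((b + d) / 2 : ℝ) = b := by ring
    have hprod : ((b - d) / 2 : ℝ) * ((b + d) / 2 : ℝ) = μ := by nlinarith
    have hfac : z ^ 2 - (((1 + μ) - x : ℝ) : ℂ) * z + (μ : ℂ)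
        = (z - (((b - d) / 2 : ℝ) : ℂ)) * (z - (((b + d) / 2 : ℝ) : ℂ)) := by
      have h1 : (((1 + μ) - x : ℝ) : ℂ) = (((b - d) / 2 : ℝ) : ℂ) + (((b + d) / 2 : ℝ) : ℂ) := by
        norm_cast; rw [hsum]
      have h2 : (μ : ℂ) = (((b - d) / 2 : ℝ) : ℂ) * (((b + d) / 2 : ℝ) : ℂ) := by
        norm_cast; rw [hprod]
      rw [h1, h2]; ring
    rw [hfac, mul_eq_zero, sub_eq_zero, sub_eq_zero]
  · have h1 : |(b - d) / 2| = -((b - d) / 2) := abs_of_neg (by nlinarith)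
    have h2 : |(b + d) / 2| = -((b + d) / 2) := abs_of_nonpos (by nlinarith)
    rw [h1, h2]
    have : -((b + d) / 2) ≤ -((b - d) / 2) := by nlinarith
    rw [max_eq_left this]
    nlinarith
  · intro _; nlinarith
  · intro h
    have h1 : |(b - d) / 2| = -((b - d) / 2) := abs_of_neg (by nlinarith)
    have h2 : |(b + d) / 2| = -((b + d) / 2) := abs_of_nonpos (by nlinarith)
    rw [h1, h2] at h
    nlinarith
end
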